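/- Let A be a finite-dimensional involutory Hopf algebra over ℂ with n = dim_ℂ A. Then the contraction of the trace character with the cotrace element equals the dimension of the algebra: χ(Λ) = n. -/

import Mathlib

/-!
Pairing `Λ` with a functional `f` gives a trace: `f Λ = tr (f ⇀ ·)`, where
`f ⇀ x = ∑ x₁ f(x₂)`. Since `S² = id`, we have `∑ a₂ S(a₁) ⊗ a₃ = 1 ⊗ a`, which writes
`(f ∘ R_a) ⇀ ·` as `∑ R_{S(a₁)} ∘ (f ⇀ ·) ∘ R_{a₂}`, with `R_c` right multiplication by `c`.
Cyclicity of the trace and `∑ S(a₁) a₂ = ε(a)` then show that `Λ` is a right integral,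
`Λ a = ε(a) Λ`. So left multiplication by `Λ` is the rank-one map `x ↦ ε(x) Λ`, whose trace is
`ε(Λ) = tr (ε ⇀ ·) = tr id = dim A`.
-/

open HopfAlgebra TensorProduct

/-- The trace character of the left regular representation:
`χ(a)` is the trace of the ℂ-linear map `x ↦ a * x`. -/
noncomputable def traceChar (A : Type*) [Ring A] [Algebra ℂ A] : A →ₗ[ℂ] ℂ :=
  (LinearMap.trace ℂ A) ∘ₗ (LinearMap.mul ℂ A)

/-- The cotrace element `Λ = ∑ᵢ (eⁱ ⊗ id)(Δ eᵢ)` associated to a basis `b`. -/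
noncomputable def cotraceElem (A : Type*) [Ring A] [HopfAlgebra ℂ A]
    {ι : Type*} [Fintype ι] (b : Module.Basis ι ℂ A) : A :=
  ∑ i, (TensorProduct.lid ℂ A)
    ((LinearMap.rTensor A (b.coord i)) (Coalgebra.comul (R := ℂ) (b i)))

open Coalgebra LinearMap

theorem apply_lid_rTensor_eq_apply_rid_lTensor {R M N : Type*} [CommSemiring R]
    [AddCommMonoid M] [Module R M] [AddCommMonoid N] [Module R N]
    (g : M →ₗ[R] R) (f : N →ₗ[R] R) (t : M ⊗[R] N) :
    f (TensorProduct.lid R N (g.rTensor N t)) = g (TensorProduct.rid R M (f.lTensor M t)) := by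
  induction t using TensorProduct.induction_on with
  | zero => simp
  | tmul x y => simp [mul_comm]
  | add t t' ht ht' => simp only [map_add, ht, ht']

section Antipode

variable {R A : Type*} [CommSemiring R] [Semiring A] [HopfAlgebra R A]

theorem sum_right_mul_antipode_left_eq_smul (hinv : ∀ a : A, antipode R (antipode R a) = a)
    {a : A} {ι : Type*} (r : Repr R a ι) :
    ∑ i ∈ r.index, r.right i * antipode R (r.left i) = counit (R := R) a • (1 : A) := by
  simpa only [map_sum, map_smul, antipode_mul_antidistrib, hinv, antipode_one] using
    congr(antipode R $(sum_mul_antipode_eq_smul r))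

theorem sum_comul_right_mul_antipode_left_tmul_one
    (hinv : ∀ a : A, antipode R (antipode R a) = a) {a : A} {ι : Type*} (r : Repr R a ι) :
    ∑ i ∈ r.index, comul (R := R) (r.right i) * (antipode R (r.left i) ⊗ₜ[R] (1 : A)) =
      1 ⊗ₜ[R] a := by
  let Φ : A ⊗[R] (A ⊗[R] A) →ₗ[R] A ⊗[R] A := lift <|
    (LinearMap.mul R (A ⊗[R] A)).flip ∘ₗ
      Algebra.TensorProduct.includeLeft.toLinearMap ∘ₗ antipode R
  have hcoassoc := sum_tmul_tmul_eq r (fun i ↦ ℛ R (r.left i)) (fun i ↦ ℛ R (r.right i))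
  simp only [← tmul_sum, Repr.eq] at hcoassoc
  have h := congr(Φ $hcoassoc)
  simp only [Φ, map_sum, lift.tmul, comp_apply, flip_apply, mul_apply', AlgHom.toLinearMap_apply,
    Algebra.TensorProduct.includeLeft_apply] at h
  rw [← h]
  simp only [Algebra.TensorProduct.tmul_mul_tmul, mul_one, ← sum_tmul,
    sum_right_mul_antipode_left_eq_smul hinv, smul_tmul, ← tmul_sum, sum_counit_smul]

end Antipode

section Hit

variable {R C : Type*} [CommSemiring R] [AddCommMonoid C] [Module R C] [Coalgebra R C]

/-- `hit f x = ∑ x₁ f(x₂)`, the action `f ⇀ x` of the dual algebra on `C`. -/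
noncomputable def Coalgebra.hit (f : C →ₗ[R] R) : C →ₗ[R] C :=
  (_root_.TensorProduct.rid R C).toLinearMap ∘ₗ f.lTensor C ∘ₗ comul

theorem Coalgebra.hit_counit : hit (counit : C →ₗ[R] R) = LinearMap.id := by
  ext x
  simp [hit, lTensor_counit_comul]

end Hit

section RightMultiplication

variable {R A : Type*} [CommSemiring R] [Semiring A]

theorem rid_lTensor_mul_tmul_one [Algebra R A] (f : A →ₗ[R] R) (t : A ⊗[R] A) (c : A) :
    TensorProduct.rid R A (f.lTensor A (t * (c ⊗ₜ[R] 1))) =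
      TensorProduct.rid R A (f.lTensor A t) * c := by
  induction t using TensorProduct.induction_on with
  | zero => simp
  | tmul x y => simp [Algebra.TensorProduct.tmul_mul_tmul]
  | add t t' ht ht' => simp only [add_mul, map_add, ht, ht']

theorem rid_lTensor_mul_one_tmul [Algebra R A] (f : A →ₗ[R] R) (t : A ⊗[R] A) (c : A) :
    TensorProduct.rid R A (f.lTensor A (t * (1 ⊗ₜ[R] c))) =
      TensorProduct.rid R A ((f ∘ₗ mulRight R c).lTensor A t) := by
  induction t using TensorProduct.induction_on with
  | zero => simp
  | tmul x y => simp [Algebra.TensorProduct.tmul_mul_tmul]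
  | add t t' ht ht' => simp only [add_mul, map_add, ht, ht']

variable [HopfAlgebra R A]

theorem Coalgebra.hit_comp_mulRight (hinv : ∀ a : A, antipode R (antipode R a) = a)
    (f : A →ₗ[R] R) {a : A} {ι : Type*} (r : Repr R a ι) :
    hit (f ∘ₗ mulRight R a) =
      ∑ i ∈ r.index, mulRight R (antipode R (r.left i)) ∘ₗ hit f ∘ₗ mulRight R (r.right i) := by
  ext x
  simp only [hit, comp_apply, LinearEquiv.coe_coe, LinearMap.sum_apply, mulRight_apply]
  rw [← rid_lTensor_mul_one_tmul, ← sum_comul_right_mul_antipode_left_tmul_one hinv r,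
    Finset.mul_sum, map_sum, map_sum]
  refine Finset.sum_congr rfl fun i _ ↦ ?_
  rw [← mul_assoc, ← Bialgebra.comul_mul, rid_lTensor_mul_tmul_one]

end RightMultiplication

section Trace

variable {R A : Type*} [CommRing R] [Ring A] [HopfAlgebra R A]

theorem Coalgebra.trace_hit_comp_mulRight [Module.Free R A] [Module.Finite R A]
    (hinv : ∀ a : A, antipode R (antipode R a) = a) (f : A →ₗ[R] R) (a : A) :
    trace R A (hit (f ∘ₗ mulRight R a)) = counit (R := R) a * trace R A (hit f) := by
  let r := ℛ R a
  have hcyc (i : A × A) :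
      trace R A (mulRight R (antipode R (r.left i)) ∘ₗ hit f ∘ₗ mulRight R (r.right i)) =
        trace R A (hit f ∘ₗ mulRight R (antipode R (r.left i) * r.right i)) := by
    rw [trace_comp_comm', comp_assoc, mulRight_mul]
  have hsum : ∑ i ∈ r.index, hit f ∘ₗ mulRight R (antipode R (r.left i) * r.right i) =
      counit (R := R) a • hit f := by
    ext x
    simp only [LinearMap.sum_apply, comp_apply, mulRight_apply, ← map_sum, ← Finset.mul_sum,
      sum_antipode_mul_eq_smul, mul_smul_comm, mul_one, map_smul, LinearMap.smul_apply]
  rw [hit_comp_mulRight hinv f r, map_sum, Finset.sum_congr rfl fun i _ ↦ hcyc i, ← map_sum,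
    hsum, map_smul, smul_eq_mul]

end Trace

section Cotrace

variable {A : Type*} [Ring A] [HopfAlgebra ℂ A] {ι : Type*} [Fintype ι] (b : Module.Basis ι ℂ A)

theorem apply_cotraceElem (f : A →ₗ[ℂ] ℂ) : f (cotraceElem A b) = trace ℂ A (hit f) := by
  classical
  rw [trace_eq_matrix_trace ℂ b, Matrix.trace, cotraceElem, map_sum]
  refine Finset.sum_congr rfl fun i _ ↦ ?_
  rw [apply_lid_rTensor_eq_apply_rid_lTensor, Matrix.diag_apply, toMatrix_apply,
    Module.Basis.coord_apply]
  rfl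

variable [FiniteDimensional ℂ A]

theorem counit_cotraceElem : counit (R := ℂ) (cotraceElem A b) = Module.finrank ℂ A := by
  rw [apply_cotraceElem, hit_counit, trace_id]

theorem cotraceElem_mul (hinv : ∀ a : A, antipode ℂ (antipode ℂ a) = a) (a : A) :
    cotraceElem A b * a = counit (R := ℂ) a • cotraceElem A b := by
  refine b.ext_elem fun i ↦ ?_
  have h := apply_cotraceElem b (b.coord i ∘ₗ mulRight ℂ a)
  rw [trace_hit_comp_mulRight hinv, ← apply_cotraceElem b] at h
  simpa using h

end Cotrace

theorem traceChar_cotrace_eq_dim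
    (A : Type*) [Ring A] [HopfAlgebra ℂ A] [FiniteDimensional ℂ A]
    (hinv : ∀ a : A, antipode (R := ℂ) (antipode (R := ℂ) a) = a)
    {ι : Type*} [Fintype ι] (b : Module.Basis ι ℂ A) :
    traceChar A (cotraceElem A b) = (Module.finrank ℂ A : ℂ) := by
  have hmul : LinearMap.mul ℂ A (cotraceElem A b) =
      (counit : A →ₗ[ℂ] ℂ).smulRight (cotraceElem A b) :=
    LinearMap.ext (cotraceElem_mul b hinv)
  rw [traceChar, comp_apply, hmul, trace_smulRight, counit_cotraceElem]
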